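/- Let n ≥ 1, a ∈ {0,1}^{n-1}, and P_a the digital net as above with N = 2^n points. Define the discrepancy function Δ(t_1,t_2) = (1/N)·#{z ∈ P_a : z_1 < t_1 and z_2 < t_2} − t_1 t_2 for (t_1,t_2) ∈ [0,1]^2. Then ∫_{[0,1]^2} Δ(t_1,t_2) dt_1 dt_2 = (h + 5)/2^{n+3} + 1/2^{2n+2}, where h = #{i ∈ {1,…,n-1} : a_i = 0}. -/

import Mathlib

open Finset

def bvec (n : ℕ) (a : Fin (n-1) → ZMod 2) (t : Fin n → ZMod 2) (k : Fin n) : ZMod 2 :=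
  t k + (if h : (k : ℕ) < n - 1 then a ⟨k, h⟩ else 0) *
    ∑ i ∈ Finset.univ.filter (fun i : Fin n => k < i), t i

noncomputable def xcoord (n : ℕ) (t : Fin n → ZMod 2) : ℝ :=
  ∑ k : Fin n, ((t k).val : ℝ) / 2 ^ (n - (k : ℕ))

noncomputable def ycoord (n : ℕ) (a : Fin (n-1) → ZMod 2) (t : Fin n → ZMod 2) : ℝ :=
  ∑ k : Fin n, ((bvec n a t k).val : ℝ) / 2 ^ ((k : ℕ) + 1)

/-!
For any finite point set in the unit square, integrating the indicators first in `t₂` and then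
in `t₁` gives `∫∫ Δ = (1/N) ∑ (1 - x)(1 - y) - 1/4`. For the digital net every digit `t_k` and
`b_l` is a nonzero linear functional on `(ZMod 2)ⁿ`, so it takes the value `1` on exactly half of
the points, and two distinct such functionals are independent. Hence `∑ x y` equals its value for
independent digits plus the diagonal terms `k = l` where `b_l = t_l`, i.e. `a_l = 0` or `l = n`;
each of these `h + 1` terms contributes `1/8`.
-/

open MeasureTheory

lemma ZMod.val_add_one_two (v : ZMod 2) : ((v + 1).val : ℝ) = 1 - v.val := by
  have h : (v + 1).val + v.val = 1 := by revert v; decide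
  rw [eq_sub_iff_add_eq]; exact_mod_cast h

lemma ZMod.val_add_two (u v : ZMod 2) :
    ((u + v).val : ℝ) = u.val + v.val - 2 * u.val * v.val := by
  have h : (u + v).val + 2 * u.val * v.val = u.val + v.val := by revert u v; decide
  rw [eq_sub_iff_add_eq]; exact_mod_cast h

lemma ZMod.val_mul_self_two (v : ZMod 2) : (v.val : ℝ) * v.val = v.val := by
  have h : v.val * v.val = v.val := by revert v; decide
  exact_mod_cast h

section Balanced

variable {G : Type*} [AddCommGroup G]

lemma AddMonoidHom.exists_apply_eq_one {f : G →+ ZMod 2} (hf : f ≠ 0) : ∃ e, f e = 1 := by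
  obtain ⟨e, he⟩ := DFunLike.ne_iff.mp hf
  refine ⟨e, ?_⟩
  generalize f e = v at he
  fin_cases v
  · exact absurd rfl he
  · rfl

variable [Fintype G]

theorem sum_val_addMonoidHom (f : G →+ ZMod 2) (hf : f ≠ 0) :
    ∑ x, ((f x).val : ℝ) = Fintype.card G / 2 := by
  obtain ⟨e, he⟩ := f.exists_apply_eq_one hf
  have h := Equiv.sum_comp (Equiv.addRight e) fun x => ((f x).val : ℝ)
  simp only [Equiv.coe_addRight, map_add, he, ZMod.val_add_one_two, sum_sub_distrib,
    sum_const, card_univ, nsmul_eq_mul, mul_one] at h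
  linarith

theorem sum_val_mul_val_addMonoidHom (f g : G →+ ZMod 2) (hf : f ≠ 0) (hg : g ≠ 0)
    (hfg : f + g ≠ 0) :
    ∑ x, ((f x).val : ℝ) * (g x).val = Fintype.card G / 4 := by
  have h := sum_val_addMonoidHom (f + g) hfg
  simp only [AddMonoidHom.add_apply, ZMod.val_add_two, sum_sub_distrib, sum_add_distrib,
    sum_val_addMonoidHom f hf, sum_val_addMonoidHom g hg, mul_assoc, ← mul_sum] at h
  linarith

variable {ι : Type*} [Fintype ι]

lemma sum_sum_val_div_addMonoidHom (f : ι → G →+ ZMod 2) (hf : ∀ k, f k ≠ 0) (p : ι → ℝ) :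
    ∑ x, ∑ k, ((f k x).val : ℝ) / p k = Fintype.card G / 2 * ∑ k, 1 / p k := by
  rw [sum_comm, mul_sum]
  refine sum_congr rfl fun k _ => ?_
  rw [← sum_div, sum_val_addMonoidHom _ (hf k), mul_one_div]

end Balanced

lemma sum_mul_sum_div {α ι κ : Type*} [Fintype α] [Fintype ι] [Fintype κ]
    (f : ι → α → ℝ) (g : κ → α → ℝ) (p : ι → ℝ) (q : κ → ℝ) :
    ∑ x, (∑ k, f k x / p k) * (∑ l, g l x / q l) = ∑ k, ∑ l, (∑ x, f k x * g l x) / (p k * q l) := by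
  simp_rw [sum_mul_sum, div_mul_div_comm, sum_div]
  rw [sum_comm]
  exact sum_congr rfl fun _ _ => sum_comm

lemma sum_val_div_mem_Icc {ι : Type*} [Fintype ι] (v : ι → ZMod 2) {p : ι → ℝ}
    (hp : ∀ k, 0 < p k) (hsum : ∑ k, 1 / p k ≤ 1) : ∑ k, ((v k).val : ℝ) / p k ∈ Set.Icc 0 1 := by
  refine ⟨sum_nonneg fun k _ => div_nonneg (Nat.cast_nonneg _) (hp k).le, hsum.trans' ?_⟩
  refine sum_le_sum fun k _ => div_le_div_of_nonneg_right ?_ (hp k).le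
  exact_mod_cast Nat.le_of_lt_succ (ZMod.val_lt (v k))

lemma sum_one_div_two_pow_succ (n : ℕ) :
    ∑ k : Fin n, (1 : ℝ) / 2 ^ ((k : ℕ) + 1) = 1 - 1 / 2 ^ n := by
  rw [Fin.sum_univ_eq_sum_range (fun k => (1 : ℝ) / 2 ^ (k + 1))]
  induction n with
  | zero => simp
  | succ n ih => rw [sum_range_succ, ih]; field_simp; ring

lemma sum_one_div_two_pow_sub (n : ℕ) :
    ∑ k : Fin n, (1 : ℝ) / 2 ^ (n - (k : ℕ)) = 1 - 1 / 2 ^ n := by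
  rw [← sum_one_div_two_pow_succ, ← Equiv.sum_comp Fin.revPerm]
  refine sum_congr rfl fun k _ => ?_
  rw [Fin.revPerm_apply, Fin.val_rev]
  congr 2
  omega

lemma integral_ite_lt {z : ℝ} (hz : z ∈ Set.Icc (0:ℝ) 1) :
    ∫ t in (0:ℝ)..1, (if z < t then (1:ℝ) else 0) = 1 - z := by
  have h : (fun t : ℝ => if z < t then (1:ℝ) else 0)
      = fun t => 1 - {t | t ≤ z}.indicator (fun _ => (1:ℝ)) t := by
    ext t
    simp only [Set.indicator_apply, Set.mem_ofPred_eq, ← not_lt]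
    split_ifs <;> norm_num
  have hanti : Antitone ({t : ℝ | t ≤ z}.indicator fun _ => (1:ℝ)) := fun s s' hss' => by
    simp only [Set.indicator_apply, Set.mem_ofPred_eq]
    split_ifs with hs' hs <;> norm_num
    exact hs (hss'.trans hs')
  rw [h, intervalIntegral.integral_sub intervalIntegrable_const hanti.intervalIntegrable,
    intervalIntegral.integral_indicator hz]
  simp

lemma intervalIntegrable_ite_lt (z a b : ℝ) :
    IntervalIntegrable (fun t : ℝ => if z < t then (1:ℝ) else 0) volume a b := by
  refine Monotone.intervalIntegrable fun s s' hss' => ?_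
  by_cases h : z < s
  · simp [h, h.trans_le hss']
  · split_ifs <;> norm_num

lemma integral_sum_mul_ite_lt {ι : Type*} (s : Finset ι) (w z : ι → ℝ)
    (hz : ∀ i ∈ s, z i ∈ Set.Icc (0:ℝ) 1) (c u : ℝ) :
    ∫ t in (0:ℝ)..1, ((∑ i ∈ s, w i * if z i < t then 1 else 0) / c - u * t)
      = (∑ i ∈ s, w i * (1 - z i)) / c - u / 2 := by
  have hint : ∀ i ∈ s, IntervalIntegrable (fun t => w i * if z i < t then (1:ℝ) else 0)
      volume 0 1 := fun i _ => (intervalIntegrable_ite_lt _ _ _).const_mul _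
  rw [intervalIntegral.integral_sub, intervalIntegral.integral_div,
    intervalIntegral.integral_finsetSum hint, intervalIntegral.integral_const_mul, integral_id]
  · congr 1
    · refine congrArg (· / c) (sum_congr rfl fun i hi => ?_)
      rw [intervalIntegral.integral_const_mul, integral_ite_lt (hz i hi)]
    · ring
  · simpa only [Finset.sum_apply] using (IntervalIntegrable.sum s hint).div_const c
  · exact intervalIntegral.intervalIntegrable_id.const_mul u

theorem integral_integral_card_filter_lt {ι : Type*} [Fintype ι] (x y : ι → ℝ)
    (hx : ∀ i, x i ∈ Set.Icc (0:ℝ) 1) (hy : ∀ i, y i ∈ Set.Icc (0:ℝ) 1) (c : ℝ) :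
    ∫ t₁ in (0:ℝ)..1, ∫ t₂ in (0:ℝ)..1,
        ((#{i | x i < t₁ ∧ y i < t₂} : ℝ) / c - t₁ * t₂)
      = (∑ i, (1 - x i) * (1 - y i)) / c - 1 / 4 := by
  have inner (t₁ : ℝ) : ∫ t₂ in (0:ℝ)..1, ((#{i | x i < t₁ ∧ y i < t₂} : ℝ) / c - t₁ * t₂)
      = (∑ i, (1 - y i) * if x i < t₁ then 1 else 0) / c - 1 / 2 * t₁ := by
    have hcard (t₂ : ℝ) : (#{i | x i < t₁ ∧ y i < t₂} : ℝ)
        = ∑ i, (if x i < t₁ then 1 else 0) * if y i < t₂ then 1 else 0 := by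
      simp only [card_filter, ite_and, ite_mul, one_mul, zero_mul, Nat.cast_sum, Nat.cast_ite,
        Nat.cast_one, Nat.cast_zero]
    simp_rw [hcard, integral_sum_mul_ite_lt univ _ y (fun i _ => hy i), mul_comm _ (1 - y _)]
    ring
  simp_rw [inner, integral_sum_mul_ite_lt univ _ x (fun i _ => hx i), mul_comm (1 - y _)]
  norm_num

section DigitalNet

/-- The coefficient `a_k` of `t_{k+1} + ⋯ + t_n` in `bvec`, extended by `a_n = 0`. -/
def aExt (n : ℕ) (a : Fin (n-1) → ZMod 2) (k : Fin n) : ZMod 2 :=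
  if h : (k : ℕ) < n - 1 then a ⟨k, h⟩ else 0

variable {n : ℕ} (a : Fin (n-1) → ZMod 2)

lemma card_aExt_eq_zero (hn : 1 ≤ n) : #{l | aExt n a l = 0} = #{i | a i = 0} + 1 := by
  obtain ⟨m, rfl⟩ : ∃ m, n = m + 1 := ⟨n - 1, by omega⟩
  rw [card_filter, card_filter, Fin.sum_univ_castSucc]
  simp [aExt]

def bvecHom (l : Fin n) : (Fin n → ZMod 2) →+ ZMod 2 :=
  AddMonoidHom.mk' (fun t => bvec n a t l) fun s t => by
    simp only [bvec, Pi.add_apply, sum_add_distrib]; ring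

@[simp]
lemma bvecHom_apply (l : Fin n) (t : Fin n → ZMod 2) : bvecHom a l t = bvec n a t l := rfl

lemma bvec_single (j l : Fin n) :
    bvec n a (Pi.single j 1) l = (if j = l then 1 else 0) + aExt n a l * if l < j then 1 else 0 := by
  simp [bvec, aExt, Pi.single_apply, eq_comm]

lemma card_fun_zmod_two : Fintype.card (Fin n → ZMod 2) = (2 : ℝ) ^ n := by
  simp

lemma evalHom_ne_zero (k : Fin n) : Pi.evalAddMonoidHom (fun _ => ZMod 2) k ≠ 0 :=
  DFunLike.ne_iff.mpr ⟨Pi.single k 1, by simp⟩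

lemma bvecHom_ne_zero (l : Fin n) : bvecHom a l ≠ 0 :=
  DFunLike.ne_iff.mpr ⟨Pi.single l 1, by simp [bvec_single]⟩

lemma evalHom_add_bvecHom_ne_zero {k l : Fin n} (h : ¬(k = l ∧ aExt n a l = 0)) :
    Pi.evalAddMonoidHom (fun _ => ZMod 2) k + bvecHom a l ≠ 0 := by
  refine DFunLike.ne_iff.mpr ?_
  rcases lt_trichotomy k l with hkl | rfl | hkl
  · exact ⟨Pi.single k 1, by simp [bvec_single, hkl.ne, hkl.not_gt]⟩
  · have hk : (k : ℕ) + 1 < n := by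
      by_contra hk; exact h ⟨rfl, dif_neg (by omega)⟩
    refine ⟨Pi.single ⟨k + 1, hk⟩ 1, ?_⟩
    simpa [bvec_single, Fin.ext_iff, Fin.lt_def] using h
  · exact ⟨Pi.single l 1, by simp [bvec_single, hkl.ne']⟩

lemma sum_val_mul_val_bvec (k l : Fin n) :
    ∑ t : Fin n → ZMod 2, ((t k).val : ℝ) * (bvec n a t l).val
      = 2 ^ n / 4 + if k = l then (if aExt n a l = 0 then 2 ^ n / 4 else 0) else 0 := by
  by_cases h : k = l ∧ aExt n a l = 0
  · obtain ⟨rfl, h0⟩ := h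
    have hb (t : Fin n → ZMod 2) : bvec n a t k = t k := by
      change t k + aExt n a k * _ = _
      rw [h0, zero_mul, add_zero]
    simp_rw [hb, ZMod.val_mul_self_two, if_pos h0, if_true]
    rw [← card_fun_zmod_two]
    have := sum_val_addMonoidHom _ (evalHom_ne_zero k)
    simp only [Pi.evalAddMonoidHom_apply] at this
    rw [this]
    ring
  · have := sum_val_mul_val_addMonoidHom _ _ (evalHom_ne_zero k) (bvecHom_ne_zero a l)
      (evalHom_add_bvecHom_ne_zero a h)
    simp only [Pi.evalAddMonoidHom_apply, bvecHom_apply, card_fun_zmod_two] at this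
    rw [this]
    split_ifs with hkl h0
    · exact absurd ⟨hkl, h0⟩ h
    all_goals ring

lemma sum_xcoord : ∑ t, xcoord n t = 2 ^ n / 2 * (1 - 1 / 2 ^ n) := by
  have := sum_sum_val_div_addMonoidHom _ (evalHom_ne_zero (n := n)) fun k => 2 ^ (n - (k : ℕ))
  rwa [card_fun_zmod_two, sum_one_div_two_pow_sub] at this

lemma sum_ycoord : ∑ t, ycoord n a t = 2 ^ n / 2 * (1 - 1 / 2 ^ n) := by
  have := sum_sum_val_div_addMonoidHom _ (bvecHom_ne_zero a) fun k => 2 ^ ((k : ℕ) + 1)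
  rwa [card_fun_zmod_two, sum_one_div_two_pow_succ] at this

lemma sum_xcoord_mul_ycoord :
    ∑ t, xcoord n t * ycoord n a t = 2 ^ n / 4 * (1 - 1 / 2 ^ n) ^ 2 + #{l | aExt n a l = 0} / 8 := by
  have hdiag (l : Fin n) : (2 : ℝ) ^ n / 4 / (2 ^ (n - (l : ℕ)) * 2 ^ ((l : ℕ) + 1)) = 1 / 8 := by
    rw [← pow_add, show n - (l : ℕ) + ((l : ℕ) + 1) = n + 1 by omega, pow_succ]
    field_simp; ring
  simp only [xcoord, ycoord, sum_mul_sum_div, sum_val_mul_val_bvec, add_div, sum_add_distrib]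
  have hprod : ∑ k : Fin n, ∑ l : Fin n, (2 : ℝ) ^ n / 4 / (2 ^ (n - (k : ℕ)) * 2 ^ ((l : ℕ) + 1))
      = 2 ^ n / 4 * ((∑ k : Fin n, 1 / 2 ^ (n - (k : ℕ))) * ∑ l : Fin n, 1 / 2 ^ ((l : ℕ) + 1)) := by
    simp_rw [sum_mul_sum, mul_sum, one_div_mul_one_div, mul_one_div]
  simp_rw [hprod, sum_one_div_two_pow_sub, sum_one_div_two_pow_succ, ite_div, zero_div,
    sum_ite_eq, mem_univ, if_true, hdiag, ← sum_filter, sum_const, nsmul_eq_mul]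
  ring

lemma xcoord_mem_Icc (t : Fin n → ZMod 2) : xcoord n t ∈ Set.Icc 0 1 :=
  sum_val_div_mem_Icc _ (fun _ => by positivity)
    (by rw [sum_one_div_two_pow_sub]; exact sub_le_self _ (by positivity))

lemma ycoord_mem_Icc (t : Fin n → ZMod 2) :
    ycoord n a t ∈ Set.Icc 0 1 :=
  sum_val_div_mem_Icc _ (fun _ => by positivity)
    (by rw [sum_one_div_two_pow_succ]; exact sub_le_self _ (by positivity))

end DigitalNet

theorem stmt5 (n : ℕ) (hn : 1 ≤ n) (a : Fin (n-1) → ZMod 2) :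
    (∫ t₁ in (0:ℝ)..1, ∫ t₂ in (0:ℝ)..1,
        (((Finset.univ.filter
            (fun t : Fin n → ZMod 2 => xcoord n t < t₁ ∧ ycoord n a t < t₂)).card : ℝ) / 2 ^ n
          - t₁ * t₂))
      = (((Finset.univ.filter (fun i : Fin (n-1) => a i = 0)).card : ℝ) + 5) / 2 ^ (n + 3)
        + 1 / 2 ^ (2 * n + 2) := by
  rw [integral_integral_card_filter_lt _ _ xcoord_mem_Icc (ycoord_mem_Icc a)]
  have hexpand : ∑ t, (1 - xcoord n t) * (1 - ycoord n a t)
      = 2 ^ n - ∑ t, xcoord n t - ∑ t, ycoord n a t + ∑ t, xcoord n t * ycoord n a t := by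
    simp only [sub_mul, mul_sub, one_mul, mul_one, sum_sub_distrib, sum_const, card_univ,
      nsmul_eq_mul, card_fun_zmod_two]
    ring
  rw [hexpand, sum_xcoord, sum_ycoord, sum_xcoord_mul_ycoord, card_aExt_eq_zero a hn]
  push_cast
  field_simp
  ring
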